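/- arXiv:math/0311338 — 5 statements merged into one kernel-verified Lean document; each statement's English description precedes it below -/
import Mathlib

section
/- Let Δ ⊂ ℝ^d be a d-dimensional lattice polytope, C_Δ the cone over Δ×{1} in ℝ^{d+1}, and S_Δ = K[C_Δ ∩ ℤ^{d+1}] the associated semigroup ring graded by the last coordinate. Then the Hessian H_f of f = Σ_{i=1}^n a_i t^{v_i}, where v_1,…,v_n are the lattice points of Δ×{1}, equals Σ_{J ⊆ {1,…,n}, |J|=d+1} V(J)^2 · Π_{i∈J} a_i t^{v_i}, where V(J) is the (d+1)-dimensional normalized volume of the parallelotype spanned by {v_i}_{i∈J}. -/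
open Finset

namespace TRMC

variable {ι : Type*} [Fintype ι] [DecidableEq ι] {D : ℕ}

/-- The conic (ℚ≥0) hull of the vectors indexed by `S`. -/
def coneOf (v : ι → Fin D → ℤ) (S : Finset ι) : Set (Fin D → ℚ) :=
  {x | ∃ c : ι → ℚ, (∀ i, 0 ≤ c i) ∧ (∀ i ∉ S, c i = 0) ∧
    x = ∑ i, c i • fun j => (v i j : ℚ)}

/-- The real conic hull of the vectors indexed by `S`. -/
def coneOfR (v : ι → Fin D → ℤ) (S : Finset ι) : Set (Fin D → ℝ) :=
  {x | ∃ c : ι → ℝ, (∀ i, 0 ≤ c i) ∧ (∀ i ∉ S, c i = 0) ∧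
    x = ∑ i, c i • fun j => (v i j : ℝ)}

/-- Normalized volume of the parallelotype spanned by a `D`-element family of
rational vectors (`1` as junk value if `S.card ≠ D`). -/
noncomputable def volc (v : ι → Fin D → ℚ) (S : Finset ι) : ℚ :=
  if h : S.card = D then
    |Matrix.det (Matrix.of fun a b : Fin D =>
      v (((finCongr h.symm).trans S.equivFin.symm) a) b)|
  else 1

/-- Normalized volume (lattice index) of the simplicial cone generated by
`{v i : i ∈ S}` (junk value `1` if `S.card ≠ D`). -/
noncomputable def vol (v : ι → Fin D → ℤ) (S : Finset ι) : ℚ :=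
  volc (fun i j => (v i j : ℚ)) S

/-- A (finite, rational, simplicial) fan description: the data of the primitive ray
generators and of the maximal cones, each simplicial, pairwise intersecting in faces. -/
structure SimplicialFan (ι : Type*) [Fintype ι] [DecidableEq ι] (D : ℕ) where
  v : ι → Fin D → ℤ
  maxCones : Finset (Finset ι)
  card_eq : ∀ σ ∈ maxCones, σ.card = D
  indep : ∀ σ ∈ maxCones, LinearIndependent ℚ fun i : σ => fun j => ((v i j : ℚ))
  inter_face : ∀ σ ∈ maxCones, ∀ τ ∈ maxCones,
    coneOf v σ ∩ coneOf v τ = coneOf v (σ ∩ τ)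

/-- The fan is complete: its cones cover the whole space. -/
def IsComplete (F : SimplicialFan ι D) : Prop :=
  ∀ x : Fin D → ℚ, ∃ σ ∈ F.maxCones, x ∈ coneOf F.v σ

/-- The space of rational linear relations among the vectors `v i`. -/
def relSpace (v : ι → Fin D → ℤ) : Submodule ℚ (ι → ℚ) where
  carrier := {x | ∑ i, x i • (fun j => (v i j : ℚ)) = 0}
  add_mem' := by
    intro a b ha hb
    simp only [Set.mem_setOf_eq] at *
    simp only [Pi.add_apply, add_smul, Finset.sum_add_distrib, ha, hb, add_zero]
  zero_mem' := by simp
  smul_mem' := by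
    intro c x hx
    simp only [Set.mem_setOf_eq] at *
    simp only [Pi.smul_apply, smul_assoc, ← Finset.smul_sum, hx, smul_zero]

/-- The restriction to `relSpace v` of the `i`-th coordinate function;
these are the images of the dual basis vectors `eᵢ*` in `R(Σ)*`. -/
def coordDual (v : ι → Fin D → ℤ) (i : ι) : Module.Dual ℚ (relSpace v) :=
  (LinearMap.proj i).comp (relSpace v).subtype

/-- The locus in `relSpace v` where all coordinates are nonzero (where all the
Laurent monomials are regular). -/
def Udom (v : ι → Fin D → ℤ) : Set (relSpace v) :=
  {x | ∀ i, (x : ι → ℚ) i ≠ 0}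

/-- The Laurent monomial `x^m`, as a rational function on `relSpace v`. -/
noncomputable def mono (v : ι → Fin D → ℤ) (m : ι → ℤ) : Udom v → ℚ :=
  fun x => ∏ i, ((x : relSpace v) : ι → ℚ) i ^ (m i)

/-- A linear functional having the defining properties of the Jeffrey–Kirwan residue
of the (complete simplicial) fan `F`: it kills degenerate fractions of degree
`-(card ι - D)` and takes the prescribed values on basic fractions. -/
structure JKData (F : SimplicialFan ι D) where
  JK : (Udom F.v → ℚ) →ₗ[ℚ] ℚ
  basic : ∀ I : Finset ι,
    LinearIndependent ℚ (fun i : I => coordDual F.v i) →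
    Submodule.span ℚ (Set.range fun i : I => coordDual F.v i) = ⊤ →
    JK (mono F.v fun i => if i ∈ I then -1 else 0) =
      if Iᶜ ∈ F.maxCones then (vol F.v Iᶜ)⁻¹ else 0
  degen : ∀ m : ι → ℤ, (∀ i, m i ≤ 0) →
    ((∑ i, m i) = -((Fintype.card ι : ℤ) - D)) →
    Submodule.span ℚ (Set.range fun i : {i // m i < 0} => coordDual F.v (i : ι)) ≠ ⊤ →
    JK (mono F.v m) = 0

/-- `ℓ` is the vertex-value vector of a convex conewise linear function on the
subfan with maximal cones `C`, relative to the rays indexed by `A`. -/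
def ConvexPL (v : ι → Fin D → ℤ) (C : Finset (Finset ι)) (A : Finset ι) (ℓ : ι → ℚ) : Prop :=
  ∀ σ ∈ C, ∃ w : (Fin D → ℚ) →ₗ[ℚ] ℚ,
    (∀ i ∈ σ, w (fun j => (v i j : ℚ)) = ℓ i) ∧ ∀ i ∈ A, w (fun j => (v i j : ℚ)) ≤ ℓ i

/-- Strictly convex (ample) conewise linear function on the subfan with maximal
cones `C`, relative to the rays indexed by `A`. -/
def StrictConvexPL (v : ι → Fin D → ℤ) (C : Finset (Finset ι)) (A : Finset ι) (ℓ : ι → ℚ) : Prop :=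
  ∀ σ ∈ C, ∃ w : (Fin D → ℚ) →ₗ[ℚ] ℚ,
    (∀ i ∈ σ, w (fun j => (v i j : ℚ)) = ℓ i) ∧
    (∀ i ∈ A, w (fun j => (v i j : ℚ)) ≤ ℓ i) ∧
    ∀ i ∈ A, i ∉ σ → w (fun j => (v i j : ℚ)) < ℓ i

/-- `β` lies in the Mori cone: it pairs nonnegatively with every convex conewise
linear function of the (sub)fan. -/
def EffOn (v : ι → Fin D → ℤ) (C : Finset (Finset ι)) (A : Finset ι) (β : ι → ℤ) : Prop :=
  ∀ ℓ : ι → ℚ, ConvexPL v C A ℓ → 0 ≤ ∑ i ∈ A, ℓ i * (β i)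

/-- The integral linear map `ℤ^ι → ℤ^D` sending `eᵢ ↦ vᵢ`. -/
def intSpan (v : ι → Fin D → ℤ) : (ι → ℤ) →ₗ[ℤ] (Fin D → ℤ) where
  toFun x := ∑ i, x i • v i
  map_add' := by
    intro a b
    simp only [Pi.add_apply, add_smul, Finset.sum_add_distrib]
  map_smul' := by
    intro c x
    simp only [Pi.smul_apply, smul_assoc, ← Finset.smul_sum, RingHom.id_apply]


section CauchyBinet

lemma prod_zsmul {R : Type*} [CommRing R] (z : Fin D → ℤ) (r : Fin D → R) :
    ∏ a, (z a • r a) = (∏ a, z a) • ∏ a, r a := by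
  simp [zsmul_eq_mul, Finset.prod_mul_distrib]

/-- Cauchy–Binet style expansion of the Hessian-type determinant. -/
lemma hessian_key {R : Type*} [CommRing R] [Algebra ℚ R] {n : ℕ}
    (v : Fin n → Fin D → ℤ) (x : Fin n → R) :
    Matrix.det (Matrix.of fun a b : Fin D => ∑ k, (v k a * v k b : ℤ) • x k)
    = ∑ J ∈ Finset.univ.powersetCard D, (vol v J) ^ 2 • ∏ k ∈ J, x k := by
  classical
  set T : (Fin D → Fin n) → R := fun φ =>
    ((Matrix.of fun a b : Fin D => v (φ a) b).det * ∏ a, v (φ a) a) • ∏ a, x (φ a) with hT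
  have step1 : Matrix.det (Matrix.of fun a b : Fin D => ∑ k, (v k a * v k b : ℤ) • x k)
      = ∑ φ : Fin D → Fin n, T φ := by
    rw [Matrix.det_apply]
    have expand : ∀ σ : Equiv.Perm (Fin D),
        (∏ a, (Matrix.of fun a b : Fin D => ∑ k, (v k a * v k b : ℤ) • x k) (σ a) a)
          = ∑ φ : Fin D → Fin n,
              ((∏ a, v (φ a) (σ a)) * ∏ a, v (φ a) a) • ∏ a, x (φ a) := by
      intro σ
      have h0 : (∏ a, (Matrix.of fun a b : Fin D => ∑ k, (v k a * v k b : ℤ) • x k) (σ a) a)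
          = ∏ a, ∑ k ∈ univ, (v k (σ a) * v k a : ℤ) • x k := rfl
      rw [h0, Finset.prod_univ_sum]
      rw [Fintype.piFinset_univ]
      refine Finset.sum_congr rfl fun φ _ => ?_
      rw [prod_zsmul]
      congr 1
      rw [Finset.prod_mul_distrib]
    calc (∑ σ : Equiv.Perm (Fin D), Equiv.Perm.sign σ •
            ∏ a, (Matrix.of fun a b : Fin D => ∑ k, (v k a * v k b : ℤ) • x k) (σ a) a)
        = ∑ σ : Equiv.Perm (Fin D), ∑ φ : Fin D → Fin n,
            (((Equiv.Perm.sign σ : ℤ) * ∏ a, v (φ a) (σ a)) * ∏ a, v (φ a) a) • ∏ a, x (φ a) := by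
          refine Finset.sum_congr rfl fun σ _ => ?_
          rw [expand σ, Finset.smul_sum]
          refine Finset.sum_congr rfl fun φ _ => ?_
          rw [Units.smul_def, smul_smul]
          ring_nf
      _ = ∑ φ : Fin D → Fin n, ∑ σ : Equiv.Perm (Fin D),
            (((Equiv.Perm.sign σ : ℤ) * ∏ a, v (φ a) (σ a)) * ∏ a, v (φ a) a) • ∏ a, x (φ a) :=
          Finset.sum_comm
      _ = ∑ φ : Fin D → Fin n, T φ := by
          refine Finset.sum_congr rfl fun φ _ => ?_
          rw [hT]
          rw [← Finset.sum_smul]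
          congr 1
          rw [← Finset.sum_mul]
          congr 1
          have h1 : (Matrix.of fun a b : Fin D => v (φ a) b).det
              = (Matrix.of fun a b : Fin D => v (φ b) a).det := by
            rw [← Matrix.det_transpose]; rfl
          rw [h1, Matrix.det_apply']
          rfl
  rw [step1]
  have hzero : ∀ φ : Fin D → Fin n, ¬ Function.Injective φ → T φ = 0 := by
    intro φ hφ
    rw [Function.not_injective_iff] at hφ
    obtain ⟨a, b, hab, hne⟩ := hφ
    have hdet : (Matrix.of fun a b : Fin D => v (φ a) b).det = 0 := by
      refine Matrix.det_zero_of_row_eq hne ?_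
      funext c
      simp [hab]
    simp [hT, hdet]
  have hfilter : (∑ φ : Fin D → Fin n, T φ)
      = ∑ φ ∈ univ.filter (fun φ => Function.Injective φ), T φ := by
    symm
    refine Finset.sum_filter_of_ne fun φ _ h => ?_
    by_contra hni
    exact h (hzero φ hni)
  have hmaps : ∀ φ ∈ univ.filter (fun φ : Fin D → Fin n => Function.Injective φ),
      Finset.image φ univ ∈ Finset.univ.powersetCard D := by
    intro φ hφ
    rw [Finset.mem_filter] at hφ
    rw [Finset.mem_powersetCard]
    refine ⟨Finset.subset_univ _, ?_⟩
    rw [Finset.card_image_of_injective _ hφ.2, Finset.card_univ, Fintype.card_fin]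
  rw [hfilter, ← Finset.sum_fiberwise_of_maps_to hmaps T]
  refine Finset.sum_congr rfl fun J hJ => ?_
  obtain ⟨-, hJc⟩ := Finset.mem_powersetCard.mp hJ
  set e : Fin D ≃ {y // y ∈ J} := (finCongr hJc.symm).trans J.equivFin.symm with he
  set N : Matrix (Fin D) (Fin D) ℤ := Matrix.of fun a b : Fin D => v (e a : Fin n) b with hN
  have himg : ((univ.filter fun φ : Fin D → Fin n => Function.Injective φ).filter
        (fun φ => Finset.image φ univ = J))
      = Finset.image (fun σ : Equiv.Perm (Fin D) => fun a => (e (σ a) : Fin n)) univ := by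
    ext φ
    simp only [Finset.mem_filter, Finset.mem_image, Finset.mem_univ, true_and]
    constructor
    · rintro ⟨hinj, himage⟩
      have hmem : ∀ a, φ a ∈ J := fun a =>
        himage ▸ Finset.mem_image_of_mem φ (Finset.mem_univ a)
      have hbij : Function.Bijective (fun a => (⟨φ a, hmem a⟩ : {y // y ∈ J})) := by
        refine (Fintype.bijective_iff_injective_and_card _).2
          ⟨fun a b hab => hinj (congrArg Subtype.val hab), ?_⟩
        rw [Fintype.card_coe, hJc, Fintype.card_fin]
      refine ⟨(Equiv.ofBijective _ hbij).trans e.symm, ?_⟩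
      funext a
      simp [Equiv.ofBijective]
    · rintro ⟨σ, rfl⟩
      refine ⟨fun a b hab => σ.injective (e.injective (Subtype.ext hab)), ?_⟩
      ext k
      simp only [Finset.mem_image, Finset.mem_univ, true_and]
      constructor
      · rintro ⟨a, rfl⟩; exact (e (σ a)).2
      · intro hk; exact ⟨σ.symm (e.symm ⟨k, hk⟩), by simp⟩
  rw [himg, Finset.sum_image (fun σ _ σ' _ hσ => ?_)]
  swap
  · refine Equiv.ext fun a => ?_
    have := congrFun hσ a
    exact e.injective (Subtype.ext this)
  have hprodx : ∀ σ : Equiv.Perm (Fin D),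
      (∏ a, x (e (σ a) : Fin n)) = ∏ k ∈ J, x k := by
    intro σ
    rw [Equiv.prod_comp σ (fun a => x (e a : Fin n)),
      Equiv.prod_comp e (fun k : {y // y ∈ J} => x (k : Fin n)),
      Finset.univ_eq_attach, Finset.prod_attach J x]
  have hTσ : ∀ σ : Equiv.Perm (Fin D),
      T (fun a => (e (σ a) : Fin n))
        = (((Equiv.Perm.sign σ : ℤ) * ∏ a, N (σ a) a) * N.det) • ∏ k ∈ J, x k := by
    intro σ
    rw [hT]
    have h1 : (Matrix.of fun a b : Fin D => v (e (σ a) : Fin n) b).det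
        = (Equiv.Perm.sign σ : ℤ) * N.det := by
      have h2 : (Matrix.of fun a b : Fin D => v (e (σ a) : Fin n) b) = N.submatrix σ id := rfl
      rw [h2, Matrix.det_permute]
      norm_cast
    show ((Matrix.of fun a b : Fin D => v (e (σ a) : Fin n) b).det
        * ∏ a, v (e (σ a) : Fin n) a) • ∏ a, x (e (σ a) : Fin n) = _
    rw [h1, hprodx σ]
    congr 1
    have h3 : (∏ a, v (e (σ a) : Fin n) a) = ∏ a, N (σ a) a := rfl
    rw [h3]; ring
  rw [Finset.sum_congr rfl fun σ _ => hTσ σ, ← Finset.sum_smul, ← Finset.sum_mul]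
  have hdetN : (∑ σ : Equiv.Perm (Fin D), (Equiv.Perm.sign σ : ℤ) * ∏ a, N (σ a) a) = N.det := by
    rw [Matrix.det_apply']
    simp [Matrix.detRowAlternating]
  rw [hdetN]
  have hvol : (vol v J) ^ 2 = ((N.det * N.det : ℤ) : ℚ) := by
    rw [vol, volc, dif_pos hJc, sq_abs]
    have hQ : (Matrix.of fun a b : Fin D =>
        ((fun i j => (v i j : ℚ)) (((finCongr hJc.symm).trans J.equivFin.symm) a) b))
        = (Int.castRingHom ℚ).mapMatrix N := rfl
    rw [hQ, ← RingHom.map_det]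
    simp only [Int.coe_castRingHom, eq_intCast]
    push_cast
    ring
  rw [hvol, Int.cast_smul_eq_zsmul]

end CauchyBinet

open scoped BigOperators in
/-- For `f = ∑ aₖ t^{vₖ}`, with `v₁,…,vₙ` the lattice points of
`Δ × {1}` for a `d`-dimensional lattice polytope `Δ`, the Hessian
`H_f = det(∑ₖ (wₐ,vₖ)(w_b,vₖ) aₖ t^{vₖ})_{a,b}` equals
`∑_{|J| = d+1} V(J)² ∏_{k∈J} aₖ t^{vₖ}`. Here the computation takes place in the
Laurent ring `K[a₁,…,aₙ][ℤ^{d+1}]`, `aₖ = Xₖ`, `t^{vₖ} = single (vₖ) 1`. -/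
theorem toric_hessian_expansion (d n : ℕ) (vbar : Fin n → Fin d → ℤ)
    (Δ : Set (Fin d → ℚ))
    (hpoly : ∃ Vset : Finset (Fin d → ℤ),
      Δ = convexHull ℚ ((fun z : Fin d → ℤ => fun j => (z j : ℚ)) '' Vset))
    (hdim : affineSpan ℚ Δ = ⊤)
    (hlatt : ∀ z : Fin d → ℤ, ((fun j => (z j : ℚ)) ∈ Δ) ↔ ∃ k, vbar k = z)
    (hinj : Function.Injective vbar)
    (v : Fin n → Fin (d + 1) → ℤ)
    (hv : ∀ k, v k = Fin.snoc (vbar k) 1) :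
    Matrix.det (Matrix.of fun a b : Fin (d + 1) =>
      ∑ k, (v k a * v k b : ℤ) •
        (AddMonoidAlgebra.single (v k) (MvPolynomial.X k) :
          AddMonoidAlgebra (MvPolynomial (Fin n) ℚ) (Fin (d + 1) → ℤ)))
    = ∑ J ∈ Finset.univ.powersetCard (d + 1),
        (TRMC.vol v J) ^ 2 •
          ∏ k ∈ J, (AddMonoidAlgebra.single (v k) (MvPolynomial.X k) :
            AddMonoidAlgebra (MvPolynomial (Fin n) ℚ) (Fin (d + 1) → ℤ)) :=
  hessian_key v fun k => AddMonoidAlgebra.single (v k) (MvPolynomial.X k)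
end TRMC
end

section
/- The Hessian H_f of f = Σ_{i=1}^n a_i t^{v_i} lies in the ideal I_Δ of the semigroup ring S_Δ generated by monomials t^m with m in the interior of the cone C_Δ. More precisely, every monomial t^{Σ_{i∈J} v_i} appearing with nonzero coefficient V(J)^2 in the expansion of H_f has exponent Σ_{i∈J} v_i lying in the interior of C_Δ. -/
open Finset

namespace TRMC

variable {ι : Type*} [Fintype ι] [DecidableEq ι] {D : ℕ}

/-- Every monomial `t^{∑_{i∈J} vᵢ}` occurring with nonzero
coefficient `V(J)²` in the Hessian `H_f` has exponent in the interior of the cone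
`C_Δ` (the real conic hull of the lattice points `vᵢ` of `Δ × {1}`); hence
`H_f ∈ I_Δ^{d+1}`. -/
theorem hessian_monomials_interior (d n : ℕ) (vbar : Fin n → Fin d → ℤ)
    (Δ : Set (Fin d → ℚ))
    (hpoly : ∃ Vset : Finset (Fin d → ℤ),
      Δ = convexHull ℚ ((fun z : Fin d → ℤ => fun j => (z j : ℚ)) '' Vset))
    (hdim : affineSpan ℚ Δ = ⊤)
    (hlatt : ∀ z : Fin d → ℤ, ((fun j => (z j : ℚ)) ∈ Δ) ↔ ∃ k, vbar k = z)
    (hinj : Function.Injective vbar)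
    (v : Fin n → Fin (d + 1) → ℤ)
    (hv : ∀ k, v k = Fin.snoc (vbar k) 1)
    (J : Finset (Fin n)) (hJ : J.card = d + 1)
    (hVJ : TRMC.vol v J ≠ 0) :
    (fun j => ((∑ i ∈ J, v i j : ℤ) : ℝ)) ∈
      interior (TRMC.coneOfR v Finset.univ) := by
  classical
  set e : Fin (d + 1) ≃ {x // x ∈ J} := (finCongr hJ.symm).trans J.equivFin.symm with he
  set M : Matrix (Fin (d + 1)) (Fin (d + 1)) ℚ :=
    Matrix.of (fun a b => ((v (e a) b : ℤ) : ℚ)) with hM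
  have hvol : TRMC.vol v J = |M.det| := by
    unfold TRMC.vol TRMC.volc
    rw [dif_pos hJ]
  have hdetQ : M.det ≠ 0 := by
    intro h0
    apply hVJ
    rw [hvol, h0, abs_zero]
  set Mr : Matrix (Fin (d + 1)) (Fin (d + 1)) ℝ :=
    M.map (fun q : ℚ => (q : ℝ)) with hMr
  have hdetR : Mr.det ≠ 0 := by
    have : Mr.det = ((M.det : ℚ) : ℝ) := (RingHom.map_det (Rat.castHom ℝ) M).symm
    rw [this]
    exact_mod_cast hdetQ
  have hdetT : Mr.transpose.det ≠ 0 := by rwa [Matrix.det_transpose]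
  have hUnit : IsUnit Mr.transpose.det := isUnit_iff_ne_zero.mpr hdetT
  set N : Matrix (Fin (d + 1)) (Fin (d + 1)) ℝ := Mr.transpose⁻¹ with hN
  have hNM : N * Mr.transpose = 1 := Matrix.nonsing_inv_mul _ hUnit
  have hMN : Mr.transpose * N = 1 := Matrix.mul_nonsing_inv _ hUnit
  -- the open set
  set U : Set (Fin (d + 1) → ℝ) :=
    (fun y => N.mulVec y) ⁻¹' {x | ∀ a, 0 < x a} with hU
  have hUopen : IsOpen U := by
    have h1 : IsOpen {x : Fin (d + 1) → ℝ | ∀ a, 0 < x a} := by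
      have : {x : Fin (d + 1) → ℝ | ∀ a, 0 < x a} =
          ⋂ a, (fun x : Fin (d + 1) → ℝ => x a) ⁻¹' Set.Ioi 0 := by
        ext x; simp
      rw [this]
      exact isOpen_iInter_of_finite fun a =>
        (isOpen_Ioi).preimage (continuous_apply a)
    have hcont : Continuous (fun y : Fin (d + 1) → ℝ => N.mulVec y) :=
      (Matrix.mulVecLin N).continuous_of_finiteDimensional
    exact h1.preimage hcont
  -- the point equals Mrᵀ *ᵥ 1
  have hpt : (fun j => ((∑ i ∈ J, v i j : ℤ) : ℝ)) =
      Mr.transpose.mulVec (fun _ => 1) := by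
    funext j
    have : (∑ i ∈ J, v i j : ℤ) = ∑ a : Fin (d + 1), v (e a) j := by
      rw [← Finset.sum_attach J (fun i => v i j)]
      exact (Equiv.sum_comp e (fun i : {x // x ∈ J} => v (i : Fin n) j)).symm
    rw [this]
    simp [Matrix.mulVec, dotProduct, Mr, M, Matrix.transpose]
  apply mem_interior.mpr
  refine ⟨U, ?_, hUopen, ?_⟩
  · -- U ⊆ cone
    intro y hy
    simp only [hU, Set.mem_preimage, Set.mem_setOf_eq] at hy
    set x : Fin (d + 1) → ℝ := N.mulVec y with hx
    have hyx : Mr.transpose.mulVec x = y := by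
      rw [hx, Matrix.mulVec_mulVec, hMN, Matrix.one_mulVec]
    set c : Fin n → ℝ := fun i => if h : i ∈ J then x (e.symm ⟨i, h⟩) else 0 with hc
    have hce : ∀ a : Fin (d + 1), c (e a) = x a := by
      intro a
      have hmem : ((e a : {z // z ∈ J}) : Fin n) ∈ J := (e a).prop
      rw [hc]
      simp only [dif_pos hmem]
      congr 1
      have : (⟨((e a : {z // z ∈ J}) : Fin n), hmem⟩ : {z // z ∈ J}) = e a :=
        Subtype.ext rfl
      rw [this, Equiv.symm_apply_apply]
    refine ⟨c, ?_, ?_, ?_⟩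
    · intro i
      by_cases h : i ∈ J
      · simp only [hc, dif_pos h]; exact (hy _).le
      · simp [hc, dif_neg h]
    · intro i hi; exact absurd (Finset.mem_univ i) hi
    · rw [← hyx]
      funext j
      set g : Fin n → ℝ := fun i => c i * ((v i j : ℤ) : ℝ) with hg
      have h0 : ∀ i ∈ Finset.univ, i ∉ J → g i = 0 := by
        intro i _ hi
        simp [hg, hc, dif_neg hi]
      have s1 : ∑ i ∈ J, g i = ∑ i, g i :=
        Finset.sum_subset (Finset.subset_univ J) h0
      have s2 : ∑ a : Fin (d + 1), g (e a) = ∑ i ∈ J, g i := by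
        rw [Equiv.sum_comp e (fun i : {z // z ∈ J} => g (i : Fin n))]
        exact Finset.sum_coe_sort J g
      have s3 : (∑ i : Fin n, c i • fun j' => ((v i j' : ℤ) : ℝ)) j = ∑ i, g i := by
        rw [Finset.sum_apply]
        simp [hg]
      rw [s3, ← s1, ← s2]
      have s4 : ∀ a, g (e a) = x a * ((v (e a) j : ℤ) : ℝ) := by
        intro a; rw [hg]; simp only [hce]
      simp only [s4]
      simp [Matrix.mulVec, dotProduct, Mr, M, Matrix.transpose, mul_comm]
  · -- point in U
    simp only [hU, Set.mem_preimage, Set.mem_setOf_eq]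
    rw [hpt, Matrix.mulVec_mulVec, hNM, Matrix.one_mulVec]
    intro a; exact one_pos
end TRMC
end

section
/- Let Σ be a quasi-projective simplicial fan with ray generators v_1,…,v_n and relation lattice R(Σ) = ker(ℤ^n → M, e_i ↦ v_i). If β = (β_1,…,β_n) ∈ R(Σ) is such that the set {v_i : β_i < 0} lies in a single cone σ of Σ, then β lies in the Mori cone R(Σ)_eff, i.e., ⟨L, β⟩ ≥ 0 for every convex conewise linear function L on Σ. -/
open Finset

namespace TRMC

variable {ι : Type*} [Fintype ι] [DecidableEq ι] {D : ℕ}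

/-- Let `Σ` be a quasi-projective simplicial fan with ray
generators `v₁,…,vₙ`.  If `β ∈ R(Σ)` is such that `{vᵢ : βᵢ < 0}` lies in a single
cone `σ` of `Σ`, then `β` lies in the Mori cone `R(Σ)_eff`: it pairs nonnegatively
with every convex conewise linear function `L` on `Σ`. -/
theorem neg_support_in_cone_mem_Mori (n D : ℕ) (F : SimplicialFan (Fin n) D)
    (hqp : ∃ ℓ, StrictConvexPL F.v F.maxCones Finset.univ ℓ)
    (β : Fin n → ℤ)
    (hrel : (∑ i, β i • fun j => (F.v i j : ℚ)) = 0)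
    (hσ : ∃ σ ∈ F.maxCones, (Finset.univ.filter fun i => β i < 0) ⊆ σ) :
    ∀ ℓ : Fin n → ℚ, ConvexPL F.v F.maxCones Finset.univ ℓ →
      0 ≤ ∑ i, ℓ i * (β i) := by
  intro ℓ hℓ
  obtain ⟨σ, hσmem, hσsub⟩ := hσ
  obtain ⟨w, hweq, hwle⟩ := hℓ σ hσmem
  have hw0 : ∑ i, w (fun j => (F.v i j : ℚ)) * (β i) = 0 := by
    have := congrArg w hrel
    rw [map_sum, map_zero] at this
    rw [← this]
    apply Finset.sum_congr rfl
    intro i _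
    rw [map_zsmul, zsmul_eq_mul]
    push_cast
    ring
  have key : ∑ i, ℓ i * (β i)
      = ∑ i, (ℓ i - w (fun j => (F.v i j : ℚ))) * (β i) := by
    rw [← sub_eq_zero, ← Finset.sum_sub_distrib]
    rw [← hw0]
    apply Finset.sum_congr rfl
    intro i _; ring
  rw [key]
  apply Finset.sum_nonneg
  intro i _
  by_cases hb : β i < 0
  · have : i ∈ σ := hσsub (by simp [hb])
    rw [hweq i this, sub_self, zero_mul]
  · have h1 : 0 ≤ ℓ i - w (fun j => (F.v i j : ℚ)) :=
      sub_nonneg.mpr (hwle i (Finset.mem_univ i))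
    have h2 : (0 : ℚ) ≤ (β i : ℚ) := by exact_mod_cast not_lt.mp hb
    exact mul_nonneg h1 h2
end TRMC
end

section
/- Nef-partition Cayley cone structure: let Σ̄ be the complete simplicial fan from a coherent triangulation of a reflexive polytope Δ ⊂ ℝ^d with ray generators v̄_1,…,v̄_n, and let L = l_1 + ⋯ + l_r be a nef-partition with associated partition {1,…,n} = E_1 ∪ ⋯ ∪ E_r. Define v_i = (v̄_i, e_j) ∈ ℤ^{d+r} for i ∈ E_j and v_{n+j} = (0, e_j). Then the collection of cones generated by {v_{n+1},…,v_{n+r}} ∪ {v_i : v̄_i ∈ σ}, over maximal cones σ ∈ Σ̄, together with their faces, forms a simplicial fan Σ subdividing the cone C_{Δ̃} over the Cayley polytope Δ̃ = Δ_1 * ⋯ * Δ_r, and the projection q: ℝ^{d+r} → ℝ^d maps Σ onto Σ̄, with each maximal cone of Σ equal to the product of a maximal cone of Σ̄ with the simplicial cone on v_{n+1},…,v_{n+r}. -/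
/-!
A point `x = (x̄, t)` of `ℚ^{d+r}` lies in the cone of `Σ` over `σ` exactly when
`x̄ = ∑_{i ∈ σ} aᵢ v̄ᵢ` with `a ≥ 0` and `∑_{i ∈ σ ∩ E_j} aᵢ ≤ t_j` for every `j`. Everything
follows from this description. The generators are independent because the coefficients of
`(0, e_j)` are read off once those of `x̄` vanish; two cones meet in the cone over `σ ∩ τ`
because the coefficients `a` of `x̄` in the simplicial cone `σ` are unique; and every point of
`C_Δ̃` is covered because, for `x̄` in a cone `σ` of the complete fan `Σ̄`, the fibre sum
`∑_{i ∈ σ ∩ E_j} aᵢ = l_j(x̄)` is, by convexity of `l_j`, at most the fibre sum of any nonnegative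
representation of `x̄`.
-/

open Finset

namespace TRMC

variable {ι : Type*} [Fintype ι] [DecidableEq ι] {D : ℕ}

theorem linearIndependent_subtype_iff_sum_smul_eq_zero {κ R M : Type*} [Fintype κ] [Ring R]
    [AddCommGroup M] [Module R M] (f : κ → M) (S : Finset κ) :
    LinearIndependent R (fun i : S => f i) ↔
      ∀ c : κ → R, (∀ i ∉ S, c i = 0) → ∑ i, c i • f i = 0 → c = 0 := by
  classical
  rw [Fintype.linearIndependent_iff]
  constructor
  · intro h c hc hsum
    have hS : ∀ i : S, c i = 0 := h (fun i => c i) <| by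
      rw [Finset.sum_coe_sort S (fun i => c i • f i), ← hsum]
      exact Finset.sum_subset (subset_univ S) fun i _ hi => by rw [hc i hi, zero_smul]
    funext i
    by_cases hi : i ∈ S
    · exact hS ⟨i, hi⟩
    · exact hc i hi
  · intro h g hg i
    let c : κ → R := fun p => if hp : p ∈ S then g ⟨p, hp⟩ else 0
    have hc : c = 0 := h c (fun p hp => dif_neg hp) <| by
      rw [← hg, ← Finset.sum_subset (subset_univ S) fun p _ hp => by simp [c, hp],
        ← Finset.sum_coe_sort S]
      exact Finset.sum_congr rfl fun p _ => by simp only [c, dif_pos p.2]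
    simpa [c] using congrFun hc i

theorem LinearIndependent.eq_of_sum_smul_eq {κ R M : Type*} [Fintype κ] [Ring R]
    [AddCommGroup M] [Module R M] {f : κ → M} {S : Finset κ}
    (hf : LinearIndependent R (fun i : S => f i)) {c e : κ → R}
    (hc : ∀ i ∉ S, c i = 0) (he : ∀ i ∉ S, e i = 0)
    (h : ∑ i, c i • f i = ∑ i, e i • f i) : c = e :=
  sub_eq_zero.mp <| (linearIndependent_subtype_iff_sum_smul_eq_zero f S).mp hf (c - e)
    (fun i hi => by simp [hc i hi, he i hi])
    (by simp only [Pi.sub_apply, sub_smul, Finset.sum_sub_distrib, h, sub_self])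

theorem coneOf_mono {κ : Type*} [Fintype κ] (v : κ → Fin D → ℤ) {S T : Finset κ}
    (h : S ⊆ T) :
    coneOf v S ⊆ coneOf v T := by
  rintro x ⟨c, hc0, hcS, rfl⟩
  exact ⟨c, hc0, fun i hi => hcS i fun hiS => hi (h hiS), rfl⟩

/-- The left side is the value at `∑ a i • v i` of the conewise linear function with vertex
values `ℓ`. -/
theorem ConvexPL.sum_mul_le {κ : Type*} [Fintype κ] {v : κ → Fin D → ℤ}
    {C : Finset (Finset κ)} {ℓ : κ → ℚ}
    (hℓ : ConvexPL v C univ ℓ) {σ : Finset κ} (hσ : σ ∈ C) {a c : κ → ℚ}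
    (ha : ∀ i ∉ σ, a i = 0) (hc : ∀ i, 0 ≤ c i)
    (h : ∑ i, a i • (fun j => (v i j : ℚ)) = ∑ i, c i • fun j => (v i j : ℚ)) :
    ∑ i, a i * ℓ i ≤ ∑ i, c i * ℓ i := by
  obtain ⟨w, hwσ, hwle⟩ := hℓ σ hσ
  have hw := congrArg w h
  simp only [map_sum, map_smul, smul_eq_mul] at hw
  calc ∑ i, a i * ℓ i = ∑ i, a i * w (fun j => (v i j : ℚ)) := by
        refine Finset.sum_congr rfl fun i _ => ?_
        by_cases hi : i ∈ σ
        · rw [hwσ i hi]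
        · rw [ha i hi, zero_mul, zero_mul]
    _ = ∑ i, c i * w (fun j => (v i j : ℚ)) := hw
    _ ≤ ∑ i, c i * ℓ i :=
        Finset.sum_le_sum fun i _ => mul_le_mul_of_nonneg_left (hwle i (mem_univ i)) (hc i)

theorem eq_ite_of_sum_eq_one {κ : Type*} [Fintype κ] [DecidableEq κ] {y : κ → ℕ}
    (hsum : ∑ j, y j = 1) {k : κ} (hk : y k = 1) (j : κ) : y j = if k = j then 1 else 0 := by
  split_ifs with hkj
  · rw [← hkj, hk]
  · have := Finset.sum_le_sum_of_subset (f := y) (subset_univ {k, j})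
    rw [Finset.sum_pair hkj, hsum, hk] at this
    omega

section Cayley

variable {d n r : ℕ}

def cayleyVec (vbar : Fin n → Fin d → ℤ) (grp : Fin n → Fin r) :
    Fin (n + r) → Fin (d + r) → ℤ :=
  Fin.addCases (fun i => Fin.append (vbar i) (Pi.single (grp i) 1))
    fun j => Fin.append 0 (Pi.single j 1)

def cayleyIdx (r : ℕ) (S : Finset (Fin n)) : Finset (Fin (n + r)) :=
  S.map (Fin.castAddEmb r) ∪ univ.map (Fin.natAddEmb n)

def baseProj (r : ℕ) (x : Fin (d + r) → ℚ) : Fin d → ℚ := fun b => x (Fin.castAdd r b)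

@[simp]
theorem castAdd_mem_cayleyIdx_iff {S : Finset (Fin n)} {i : Fin n} :
    Fin.castAdd r i ∈ cayleyIdx r S ↔ i ∈ S := by
  simp only [cayleyIdx, mem_union, mem_map, mem_univ, true_and, Fin.ext_iff,
    Fin.coe_castAddEmb, Fin.natAddEmb_apply, Fin.val_castAdd, Fin.val_natAdd]
  refine ⟨?_, fun h => .inl ⟨i, h, rfl⟩⟩
  rintro (⟨a, ha, h⟩ | ⟨a, h⟩)
  · rwa [← Fin.ext h]
  · omega

@[simp]
theorem natAdd_mem_cayleyIdx (S : Finset (Fin n)) (j : Fin r) :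
    Fin.natAdd n j ∈ cayleyIdx r S := by
  simp [cayleyIdx]

theorem cayleyIdx_mono {S T : Finset (Fin n)} (h : S ⊆ T) : cayleyIdx r S ⊆ cayleyIdx r T :=
  union_subset_union (map_subset_map.mpr h) le_rfl

variable (vbar : Fin n → Fin d → ℤ) (grp : Fin n → Fin r)

theorem baseProj_sum_smul_cayleyVec (c : Fin (n + r) → ℚ) :
    baseProj r (∑ p, c p • fun k => (cayleyVec vbar grp p k : ℚ)) =
      ∑ i, c (Fin.castAdd r i) • fun b => (vbar i b : ℚ) := by
  funext b
  simp [baseProj, cayleyVec, Fin.sum_univ_add, Finset.sum_apply]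

theorem sum_smul_cayleyVec_natAdd (c : Fin (n + r) → ℚ) (j : Fin r) :
    (∑ p, c p • fun k => (cayleyVec vbar grp p k : ℚ)) (Fin.natAdd d j) =
      ∑ i with grp i = j, c (Fin.castAdd r i) + c (Fin.natAdd n j) := by
  simp [cayleyVec, Fin.sum_univ_add, Finset.sum_apply, Pi.single_apply, Finset.sum_filter,
    eq_comm]

theorem mem_coneOf_cayleyIdx_iff {S : Finset (Fin n)} {x : Fin (d + r) → ℚ} :
    x ∈ coneOf (cayleyVec vbar grp) (cayleyIdx r S) ↔
      ∃ a : Fin n → ℚ, (∀ i, 0 ≤ a i) ∧ (∀ i ∉ S, a i = 0) ∧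
        baseProj r x = ∑ i, a i • (fun b => (vbar i b : ℚ)) ∧
        ∀ j, ∑ i with grp i = j, a i ≤ x (Fin.natAdd d j) := by
  constructor
  · rintro ⟨c, hc0, hcS, rfl⟩
    refine ⟨fun i => c (Fin.castAdd r i), fun i => hc0 _, fun i hi => hcS _ (by simpa using hi),
      baseProj_sum_smul_cayleyVec vbar grp c, fun j => ?_⟩
    rw [sum_smul_cayleyVec_natAdd]
    exact le_add_of_nonneg_right (hc0 _)
  · rintro ⟨a, ha0, haS, hbase, hfiber⟩
    -- the slack in the fibre inequality over `j` is the coefficient of `(0, e_j)`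
    let c : Fin (n + r) → ℚ :=
      Fin.addCases a fun j => x (Fin.natAdd d j) - ∑ i with grp i = j, a i
    refine ⟨c, fun p => ?_, fun p hp => ?_, funext fun k => ?_⟩
    · induction p using Fin.addCases with
      | left i => simpa [c] using ha0 i
      | right j => simpa [c] using hfiber j
    · induction p using Fin.addCases with
      | left i => simpa [c] using haS i (by simpa using hp)
      | right j => exact absurd (natAdd_mem_cayleyIdx S j) hp
    · induction k using Fin.addCases with
      | left b =>
        have hproj :
            baseProj r x = baseProj r (∑ p, c p • fun k => (cayleyVec vbar grp p k : ℚ)) := by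
          rw [baseProj_sum_smul_cayleyVec, hbase]
          simp [c]
        exact congrFun hproj b
      | right j =>
        rw [sum_smul_cayleyVec_natAdd]
        simp [c]

theorem linearIndependent_cayleyVec {σ : Finset (Fin n)}
    (hσ : LinearIndependent ℚ fun i : σ => fun b => (vbar i b : ℚ)) :
    LinearIndependent ℚ fun p : cayleyIdx r σ => fun k => (cayleyVec vbar grp p k : ℚ) := by
  rw [linearIndependent_subtype_iff_sum_smul_eq_zero (fun i b => (vbar i b : ℚ))] at hσ
  rw [linearIndependent_subtype_iff_sum_smul_eq_zero (fun p k => (cayleyVec vbar grp p k : ℚ))]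
  intro c hc hsum
  have hbase : (fun i => c (Fin.castAdd r i)) = 0 :=
    hσ _ (fun i hi => hc _ (by simpa using hi))
      (by rw [← baseProj_sum_smul_cayleyVec, hsum]; rfl)
  funext p
  induction p using Fin.addCases with
  | left i => exact congrFun hbase i
  | right j =>
    have hj := congrFun hsum (Fin.natAdd d j)
    rw [sum_smul_cayleyVec_natAdd] at hj
    simpa [funext_iff.mp hbase] using hj

theorem baseProj_image_coneOf_cayleyIdx (S : Finset (Fin n)) :
    baseProj r '' coneOf (cayleyVec vbar grp) (cayleyIdx r S) = coneOf vbar S := by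
  ext z
  constructor
  · rintro ⟨x, hx, rfl⟩
    obtain ⟨a, ha0, haS, hxa, -⟩ := (mem_coneOf_cayleyIdx_iff vbar grp).mp hx
    exact ⟨a, ha0, haS, hxa⟩
  · rintro ⟨a, ha0, haS, rfl⟩
    have hz : baseProj r (Fin.append (∑ i, a i • fun b => (vbar i b : ℚ))
        fun j => ∑ i with grp i = j, a i) = ∑ i, a i • fun b => (vbar i b : ℚ) := by
      funext b
      simp [baseProj]
    refine ⟨_, (mem_coneOf_cayleyIdx_iff vbar grp).mpr ⟨a, ha0, haS, hz, fun j => ?_⟩, hz⟩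
    simp

theorem coneOf_cayleyIdx_inter (F : SimplicialFan (Fin n) d) {σ τ : Finset (Fin n)}
    (hσ : σ ∈ F.maxCones) (hτ : τ ∈ F.maxCones) :
    coneOf (cayleyVec F.v grp) (cayleyIdx r σ) ∩ coneOf (cayleyVec F.v grp) (cayleyIdx r τ) =
      coneOf (cayleyVec F.v grp) (cayleyIdx r (σ ∩ τ)) := by
  refine subset_antisymm (fun x ⟨hxσ, hxτ⟩ => ?_) (Set.subset_inter
    (coneOf_mono _ (cayleyIdx_mono inter_subset_left))
    (coneOf_mono _ (cayleyIdx_mono inter_subset_right)))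
  obtain ⟨a, ha0, haσ, hxa, hfiber⟩ := (mem_coneOf_cayleyIdx_iff F.v grp).mp hxσ
  obtain ⟨b, hb0, hbτ, hxb, -⟩ := (mem_coneOf_cayleyIdx_iff F.v grp).mp hxτ
  have hx : baseProj r x ∈ coneOf F.v (σ ∩ τ) := by
    rw [← F.inter_face σ hσ τ hτ]
    exact ⟨⟨a, ha0, haσ, hxa⟩, ⟨b, hb0, hbτ, hxb⟩⟩
  obtain ⟨e, he0, heστ, hxe⟩ := hx
  have hae : a = e := LinearIndependent.eq_of_sum_smul_eq (F.indep σ hσ) haσ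
    (fun i hi => heστ i fun h => hi (mem_of_mem_inter_left h)) (hxa.symm.trans hxe)
  exact (mem_coneOf_cayleyIdx_iff F.v grp).mpr ⟨e, he0, heστ, hxe, hae ▸ hfiber⟩

theorem iUnion_coneOf_cayleyIdx (F : SimplicialFan (Fin n) d) (hF : IsComplete F)
    (hconv : ∀ j, ConvexPL F.v F.maxCones univ fun i => if grp i = j then 1 else 0) :
    ⋃ σ ∈ F.maxCones, coneOf (cayleyVec F.v grp) (cayleyIdx r σ) =
      coneOf (cayleyVec F.v grp) univ := by
  refine subset_antisymm (Set.iUnion₂_subset fun σ _ => coneOf_mono _ (subset_univ _)) ?_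
  rintro _ ⟨c, hc0, -, rfl⟩
  obtain ⟨σ, hσ, a, ha0, haσ, hxa⟩ :=
    hF (baseProj r (∑ p, c p • fun k => (cayleyVec F.v grp p k : ℚ)))
  refine Set.mem_biUnion hσ <| (mem_coneOf_cayleyIdx_iff F.v grp).mpr
    ⟨a, ha0, haσ, hxa, fun j => ?_⟩
  rw [sum_smul_cayleyVec_natAdd]
  calc ∑ i with grp i = j, a i = ∑ i, a i * if grp i = j then 1 else 0 := by
        simp [Finset.sum_filter]
    _ ≤ ∑ i, c (Fin.castAdd r i) * if grp i = j then 1 else 0 :=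
        (hconv j).sum_mul_le hσ haσ (fun i => hc0 _)
          (hxa.symm.trans (baseProj_sum_smul_cayleyVec F.v grp c))
    _ = ∑ i with grp i = j, c (Fin.castAdd r i) := by simp [Finset.sum_filter]
    _ ≤ _ := le_add_of_nonneg_right (hc0 _)

theorem eq_cayleyVec {v : Fin (n + r) → Fin (d + r) → ℤ}
    (hvmain : ∀ i : Fin n, ∀ b : Fin (d + r), v (Fin.castAdd r i) b =
      if h : (b : ℕ) < d then vbar i ⟨b, h⟩ else if (b : ℕ) = d + grp i then 1 else 0)
    (hvtail : ∀ j : Fin r, ∀ b : Fin (d + r), v (Fin.natAdd n j) b =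
      if (b : ℕ) = d + j then 1 else 0) :
    v = cayleyVec vbar grp := by
  funext p b
  induction p using Fin.addCases <;> induction b using Fin.addCases <;>
    simp [cayleyVec, hvmain, hvtail, Pi.single_apply, Fin.ext_iff, eq_comm]
  omega

end Cayley

theorem cayley_fan_structure_general (d n r : ℕ) (vbar : Fin n → Fin d → ℤ)
    (Fb : SimplicialFan (Fin n) d) (hFbv : ∀ i, Fb.v i = vbar i)
    (hcompb : IsComplete Fb)
    (y : Fin r → Fin n → ℕ) (hpart : ∀ i, ∑ j, y j i = 1)
    (hconv : ∀ j, ConvexPL Fb.v Fb.maxCones Finset.univ fun i => (y j i : ℚ))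
    (grp : Fin n → Fin r) (hgrp : ∀ i, y (grp i) i = 1)
    (v : Fin (n + r) → Fin (d + r) → ℤ)
    (hvmain : ∀ i : Fin n, ∀ b : Fin (d + r), v (Fin.castAdd r i) b =
      if h : (b : ℕ) < d then vbar i ⟨b, h⟩
      else if (b : ℕ) = d + grp i then 1 else 0)
    (hvtail : ∀ j : Fin r, ∀ b : Fin (d + r), v (Fin.natAdd n j) b =
      if (b : ℕ) = d + j then 1 else 0) :
    (∀ σ ∈ Fb.maxCones,
      LinearIndependent ℚ fun p : ((σ.map (Fin.castAddEmb r)) ∪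
          (Finset.univ.map (Fin.natAddEmb n)) : Finset (Fin (n + r))) =>
        fun b => (v p b : ℚ))
    ∧ ((⋃ σ ∈ Fb.maxCones, coneOf v ((σ.map (Fin.castAddEmb r)) ∪
          (Finset.univ.map (Fin.natAddEmb n))))
        = coneOf v Finset.univ)
    ∧ (∀ σ ∈ Fb.maxCones, ∀ τ ∈ Fb.maxCones,
        coneOf v ((σ.map (Fin.castAddEmb r)) ∪
            (Finset.univ.map (Fin.natAddEmb n))) ∩
          coneOf v ((τ.map (Fin.castAddEmb r)) ∪
            (Finset.univ.map (Fin.natAddEmb n)))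
        = coneOf v (((σ ∩ τ).map (Fin.castAddEmb r)) ∪
            (Finset.univ.map (Fin.natAddEmb n))))
    ∧ (∀ σ ∈ Fb.maxCones,
        (fun x : Fin (d + r) → ℚ => fun b : Fin d => x (Fin.castAdd r b)) ''
            (coneOf v ((σ.map (Fin.castAddEmb r)) ∪
              (Finset.univ.map (Fin.natAddEmb n))))
          = coneOf Fb.v σ) := by
  obtain rfl : Fb.v = vbar := funext hFbv
  obtain rfl := eq_cayleyVec Fb.v grp hvmain hvtail
  have hconv_grp : ∀ j, ConvexPL Fb.v Fb.maxCones univ fun i => if grp i = j then 1 else 0 := by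
    intro j
    convert hconv j using 2 with i
    simp [eq_ite_of_sum_eq_one (hpart i) (hgrp i) j]
  exact ⟨fun σ hσ => linearIndependent_cayleyVec Fb.v grp (Fb.indep σ hσ),
    iUnion_coneOf_cayleyIdx grp Fb hcompb hconv_grp,
    fun σ hσ τ hτ => coneOf_cayleyIdx_inter grp Fb hσ hτ,
    fun σ _ => baseProj_image_coneOf_cayleyIdx Fb.v grp σ⟩

/-- Nef-partition Cayley cone structure.  `Σ̄` is the complete
simplicial fan of a coherent triangulation of a reflexive polytope `Δ ⊂ ℝ^d`, with
nef-partition `L = l₁ + ⋯ + l_r` given by the vertex values `y j i ∈ {0,1}`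
(`∑_j y j i = 1`, each `l_j` convex and nonzero), `E_j = {i : y j i = 1}`, and
`grp i` the index `j` with `i ∈ E_j`.  With `vᵢ = (v̄ᵢ, e_{grp i})` and
`v_{n+j} = (0, e_j)` in `ℤ^{d+r}`, the cones generated by
`{v_{n+1},…,v_{n+r}} ∪ {vᵢ : v̄ᵢ ∈ σ}` over maximal `σ ∈ Σ̄` form a simplicial fan
`Σ` subdividing the cone `C_Δ̃` over the Cayley polytope, and the projection
`q : ℝ^{d+r} → ℝ^d` maps each maximal cone of `Σ` onto the corresponding maximal
cone of `Σ̄`. -/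
theorem cayley_fan_structure (d n r : ℕ) (vbar : Fin n → Fin d → ℤ)
    (Δ : Set (Fin d → ℝ))
    (hΔ : Δ = convexHull ℝ (insert 0 (Set.range fun i => fun j => (vbar i j : ℝ))))
    (h0 : (0 : Fin d → ℝ) ∈ interior Δ)
    (hlatt : ∀ z : Fin d → ℤ, ((fun j => (z j : ℝ)) ∈ Δ) ↔ (z = 0 ∨ ∃ i, vbar i = z))
    (hrefl : ∃ Pl : Finset (Fin d → ℤ),
      {y : Fin d → ℝ | ∀ x ∈ Δ, -1 ≤ ∑ j, y j * x j} =
        convexHull ℝ ((fun z : Fin d → ℤ => fun j => (z j : ℝ)) '' Pl))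
    (Fb : SimplicialFan (Fin n) d) (hFbv : ∀ i, Fb.v i = vbar i)
    (hcompb : IsComplete Fb)
    (hcoh : ∃ ℓ, StrictConvexPL Fb.v Fb.maxCones Finset.univ ℓ)
    (y : Fin r → Fin n → ℕ) (hpart : ∀ i, ∑ j, y j i = 1)
    (hconv : ∀ j, ConvexPL Fb.v Fb.maxCones Finset.univ fun i => (y j i : ℚ))
    (hne : ∀ j, ∃ i, y j i = 1)
    (grp : Fin n → Fin r) (hgrp : ∀ i, y (grp i) i = 1)
    (v : Fin (n + r) → Fin (d + r) → ℤ)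
    (hvmain : ∀ i : Fin n, ∀ b : Fin (d + r), v (Fin.castAdd r i) b =
      if h : (b : ℕ) < d then vbar i ⟨b, h⟩
      else if (b : ℕ) = d + grp i then 1 else 0)
    (hvtail : ∀ j : Fin r, ∀ b : Fin (d + r), v (Fin.natAdd n j) b =
      if (b : ℕ) = d + j then 1 else 0) :
    (∀ σ ∈ Fb.maxCones,
      LinearIndependent ℚ fun p : ((σ.map (Fin.castAddEmb r)) ∪
          (Finset.univ.map (Fin.natAddEmb n)) : Finset (Fin (n + r))) =>
        fun b => (v p b : ℚ))
    ∧ ((⋃ σ ∈ Fb.maxCones, coneOf v ((σ.map (Fin.castAddEmb r)) ∪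
          (Finset.univ.map (Fin.natAddEmb n))))
        = coneOf v Finset.univ)
    ∧ (∀ σ ∈ Fb.maxCones, ∀ τ ∈ Fb.maxCones,
        coneOf v ((σ.map (Fin.castAddEmb r)) ∪
            (Finset.univ.map (Fin.natAddEmb n))) ∩
          coneOf v ((τ.map (Fin.castAddEmb r)) ∪
            (Finset.univ.map (Fin.natAddEmb n)))
        = coneOf v (((σ ∩ τ).map (Fin.castAddEmb r)) ∪
            (Finset.univ.map (Fin.natAddEmb n))))
    ∧ (∀ σ ∈ Fb.maxCones,
        (fun x : Fin (d + r) → ℚ => fun b : Fin d => x (Fin.castAdd r b)) ''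
            (coneOf v ((σ.map (Fin.castAddEmb r)) ∪
              (Finset.univ.map (Fin.natAddEmb n))))
          = coneOf Fb.v σ) :=
  cayley_fan_structure_general d n r vbar Fb hFbv hcompb y hpart hconv grp hgrp v hvmain hvtail
end TRMC
end

section
/- Mori cone identification in the complete intersection case: the map (β_1,…,β_{n+r}) ↦ (β_1,…,β_n) is an isomorphism R(Σ) → R(Σ̄) between the relation lattices of the Cayley fan Σ (generators v_i = (v̄_i,e_j) for i ∈ E_j, and v_{n+j} = (0,e_j)) and of Σ̄ (generators v̄_i), with inverse given by β_{n+j} = −Σ_{i∈E_j} β_i; it identifies the Mori cones, and if β ∈ R(Σ)_eff then β_{n+j} ≤ 0 for all j = 1,…,r. -/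
open Finset

namespace TRMC

variable {ι : Type*} [Fintype ι] [DecidableEq ι] {D : ℕ}

/-- Extension by zero `ℚ^d → ℚ^{d+r}`, as a linear map. -/
def extByZero (d r : ℕ) : (Fin d → ℚ) →ₗ[ℚ] (Fin (d + r) → ℚ) where
  toFun x b := if h : (b : ℕ) < d then x ⟨b, h⟩ else 0
  map_add' a b := by
    funext c
    by_cases h : (c : ℕ) < d <;> simp [h]
  map_smul' m a := by
    funext c
    by_cases h : (c : ℕ) < d <;> simp [h]

theorem extByZero_apply (d r : ℕ) (x : Fin d → ℚ) (b : Fin (d + r)) :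
    extByZero d r x b = if h : (b : ℕ) < d then x ⟨b, h⟩ else 0 := rfl

/-- Mori cone identification in the complete intersection case:
the truncation `(β₁,…,β_{n+r}) ↦ (β₁,…,βₙ)` is an isomorphism `R(Σ) → R(Σ̄)`
between the relation lattices of the Cayley fan `Σ` and of `Σ̄`, with inverse given
by `β_{n+j} = -∑_{i∈E_j} βᵢ`; it identifies the Mori cones, and `β ∈ R(Σ)_eff`
implies `β_{n+j} ≤ 0` for all `j`. -/
theorem cayley_mori_identification (d n r : ℕ) (vbar : Fin n → Fin d → ℤ)
    (Δ : Set (Fin d → ℝ))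
    (hΔ : Δ = convexHull ℝ (insert 0 (Set.range fun i => fun j => (vbar i j : ℝ))))
    (h0 : (0 : Fin d → ℝ) ∈ interior Δ)
    (hlatt : ∀ z : Fin d → ℤ, ((fun j => (z j : ℝ)) ∈ Δ) ↔ (z = 0 ∨ ∃ i, vbar i = z))
    (hrefl : ∃ Pl : Finset (Fin d → ℤ),
      {y : Fin d → ℝ | ∀ x ∈ Δ, -1 ≤ ∑ j, y j * x j} =
        convexHull ℝ ((fun z : Fin d → ℤ => fun j => (z j : ℝ)) '' Pl))
    (Fb : SimplicialFan (Fin n) d) (hFbv : ∀ i, Fb.v i = vbar i)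
    (hcompb : IsComplete Fb)
    (hcoh : ∃ ℓ, StrictConvexPL Fb.v Fb.maxCones Finset.univ ℓ)
    (y : Fin r → Fin n → ℕ) (hpart : ∀ i, ∑ j, y j i = 1)
    (hconv : ∀ j, ConvexPL Fb.v Fb.maxCones Finset.univ fun i => (y j i : ℚ))
    (hne : ∀ j, ∃ i, y j i = 1)
    (grp : Fin n → Fin r) (hgrp : ∀ i, y (grp i) i = 1)
    (F : SimplicialFan (Fin (n + r)) (d + r))
    (hvmain : ∀ i : Fin n, ∀ b : Fin (d + r), F.v (Fin.castAdd r i) b =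
      if h : (b : ℕ) < d then vbar i ⟨b, h⟩
      else if (b : ℕ) = d + grp i then 1 else 0)
    (hvtail : ∀ j : Fin r, ∀ b : Fin (d + r), F.v (Fin.natAdd n j) b =
      if (b : ℕ) = d + j then 1 else 0)
    (hFc : F.maxCones = Fb.maxCones.image fun σ =>
      (σ.map (Fin.castAddEmb r)) ∪ (Finset.univ.map (Fin.natAddEmb n))) :
    (∀ β : Fin (n + r) → ℤ,
      ((∑ p, β p • fun b => (F.v p b : ℚ)) = 0 ↔
        ((∑ i : Fin n, β (Fin.castAdd r i) • fun b => (Fb.v i b : ℚ)) = 0 ∧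
          ∀ j : Fin r, β (Fin.natAdd n j) =
            -∑ i ∈ Finset.univ.filter (fun i => grp i = j), β (Fin.castAdd r i))))
    ∧ (∀ β : Fin (n + r) → ℤ, (∑ p, β p • fun b => (F.v p b : ℚ)) = 0 →
        (EffOn F.v F.maxCones Finset.univ β ↔
          EffOn Fb.v Fb.maxCones Finset.univ fun i => β (Fin.castAdd r i)))
    ∧ (∀ β : Fin (n + r) → ℤ, (∑ p, β p • fun b => (F.v p b : ℚ)) = 0 →
        EffOn F.v F.maxCones Finset.univ β →
          ∀ j : Fin r, β (Fin.natAdd n j) ≤ 0) := by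
  classical
  -- value of y in terms of grp
  have hyval : ∀ (j : Fin r) (i : Fin n), (y j i : ℚ) = if grp i = j then 1 else 0 := by
    intro j i
    by_cases h : grp i = j
    · simp [← h, hgrp i]
    · have hle := Finset.sum_le_sum_of_subset (f := fun k => y k i)
        (Finset.subset_univ ({grp i, j} : Finset (Fin r)))
      rw [Finset.sum_pair h, hgrp i, hpart i] at hle
      have hz : y j i = 0 := by omega
      simp [h, hz]
  -- coordinate values of F.v
  have h1 : ∀ (i : Fin n) (b' : Fin d),
      F.v (Fin.castAdd r i) (Fin.castAdd r b') = vbar i b' := by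
    intro i b'
    rw [hvmain, dif_pos (by simpa using b'.isLt)]
    exact congrArg (vbar i) (Fin.ext (by simp))
  have h2 : ∀ (i : Fin n) (j : Fin r),
      F.v (Fin.castAdd r i) (Fin.natAdd d j) = if grp i = j then 1 else 0 := by
    intro i j
    rw [hvmain, dif_neg (by simp only [Fin.coe_natAdd]; omega)]
    have hiff : ((Fin.natAdd d j : Fin (d + r)) : ℕ) = d + (grp i : ℕ) ↔ grp i = j := by
      simp only [Fin.coe_natAdd]
      constructor
      · intro h; exact (Fin.val_inj.mp (by omega)).symm
      · intro h; rw [h]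
    by_cases h : grp i = j
    · rw [if_pos (hiff.mpr h), if_pos h]
    · rw [if_neg (fun hc => h (hiff.mp hc)), if_neg h]
  have h3 : ∀ (j : Fin r) (b' : Fin d),
      F.v (Fin.natAdd n j) (Fin.castAdd r b') = 0 := by
    intro j b'
    rw [hvtail, if_neg (by have := b'.isLt; simp only [Fin.coe_castAdd]; omega)]
  have h4 : ∀ (j k : Fin r),
      F.v (Fin.natAdd n k) (Fin.natAdd d j) = if k = j then 1 else 0 := by
    intro j k
    rw [hvtail]
    have hiff : ((Fin.natAdd d j : Fin (d + r)) : ℕ) = d + (k : ℕ) ↔ k = j := by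
      simp only [Fin.coe_natAdd]
      constructor
      · intro h; exact Fin.val_inj.mp (by omega)
      · intro h; rw [h]
    by_cases h : k = j
    · rw [if_pos (hiff.mpr h), if_pos h]
    · rw [if_neg (fun hc => h (hiff.mp hc)), if_neg h]
  -- evaluation of relation sums
  have hval : ∀ (β : Fin (n + r) → ℤ) (b : Fin (d + r)),
      (∑ p, β p • fun c => (F.v p c : ℚ)) b = ∑ p, (β p : ℚ) * (F.v p b : ℚ) := by
    intro β b
    rw [Finset.sum_apply]
    exact Finset.sum_congr rfl fun p _ => by simp [zsmul_eq_mul]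
  have hvalb : ∀ (β : Fin (n + r) → ℤ) (b' : Fin d),
      (∑ i : Fin n, β (Fin.castAdd r i) • fun c => (Fb.v i c : ℚ)) b' =
        ∑ i : Fin n, (β (Fin.castAdd r i) : ℚ) * (vbar i b' : ℚ) := by
    intro β b'
    rw [Finset.sum_apply]
    exact Finset.sum_congr rfl fun i _ => by simp [zsmul_eq_mul, hFbv]
  -- head coordinates of the big relation sum
  have hcoordH : ∀ (β : Fin (n + r) → ℤ) (b' : Fin d),
      ∑ p, (β p : ℚ) * (F.v p (Fin.castAdd r b') : ℚ) =
        ∑ i : Fin n, (β (Fin.castAdd r i) : ℚ) * (vbar i b' : ℚ) := by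
    intro β b'
    rw [Fin.sum_univ_add]
    have ht : ∀ j : Fin r,
        (β (Fin.natAdd n j) : ℚ) * (F.v (Fin.natAdd n j) (Fin.castAdd r b') : ℚ) = 0 := by
      intro j; rw [h3]; simp
    rw [Finset.sum_congr rfl fun j _ => ht j, Finset.sum_const, smul_zero, add_zero]
    exact Finset.sum_congr rfl fun i _ => by rw [h1]
  -- tail coordinates of the big relation sum
  have hcoordT : ∀ (β : Fin (n + r) → ℤ) (j : Fin r),
      ∑ p, (β p : ℚ) * (F.v p (Fin.natAdd d j) : ℚ) =
        (∑ i ∈ Finset.univ.filter (fun i => grp i = j), (β (Fin.castAdd r i) : ℚ)) +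
          (β (Fin.natAdd n j) : ℚ) := by
    intro β j
    rw [Fin.sum_univ_add]
    have hH : ∑ i : Fin n,
        (β (Fin.castAdd r i) : ℚ) * (F.v (Fin.castAdd r i) (Fin.natAdd d j) : ℚ)
        = ∑ i ∈ Finset.univ.filter (fun i => grp i = j), (β (Fin.castAdd r i) : ℚ) := by
      rw [Finset.sum_filter]
      refine Finset.sum_congr rfl fun i _ => ?_
      rw [h2]
      by_cases h : grp i = j <;> simp [h]
    have hT : ∑ k : Fin r,
        (β (Fin.natAdd n k) : ℚ) * (F.v (Fin.natAdd n k) (Fin.natAdd d j) : ℚ)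
        = (β (Fin.natAdd n j) : ℚ) := by
      rw [Finset.sum_eq_single j]
      · rw [h4, if_pos rfl]; simp
      · intro k _ hk; rw [h4, if_neg hk]; simp
      · intro h; exact absurd (Finset.mem_univ j) h
    rw [hH, hT]
  -- Part 1 : the relation lattice identification
  have key : ∀ β : Fin (n + r) → ℤ,
      ((∑ p, β p • fun b => (F.v p b : ℚ)) = 0 ↔
        ((∑ i : Fin n, β (Fin.castAdd r i) • fun b => (Fb.v i b : ℚ)) = 0 ∧
          ∀ j : Fin r, β (Fin.natAdd n j) =
            -∑ i ∈ Finset.univ.filter (fun i => grp i = j), β (Fin.castAdd r i))) := by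
    intro β
    constructor
    · intro h
      have hb : ∀ b : Fin (d + r), ∑ p, (β p : ℚ) * (F.v p b : ℚ) = 0 := by
        intro b
        rw [← hval β b, h]
        rfl
      constructor
      · funext b'
        have hthis := hb (Fin.castAdd r b')
        rw [hcoordH β b'] at hthis
        rw [hvalb β b', hthis]
        rfl
      · intro j
        have h0' := hb (Fin.natAdd d j)
        rw [hcoordT β j] at h0'
        have h2' : (β (Fin.natAdd n j) : ℚ) =
            -∑ i ∈ Finset.univ.filter (fun i => grp i = j), (β (Fin.castAdd r i) : ℚ) := by
          linarith
        have h3' : (β (Fin.natAdd n j) : ℚ) =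
            ((-∑ i ∈ Finset.univ.filter (fun i => grp i = j), β (Fin.castAdd r i) : ℤ) : ℚ) := by
          rw [h2']; push_cast; ring
        exact_mod_cast h3'
    · rintro ⟨hrel, htail⟩
      funext b
      rw [hval β b]
      induction b using Fin.addCases with
      | left b' =>
        rw [hcoordH β b']
        have hthis := congrFun hrel b'
        rw [hvalb β b'] at hthis
        simpa using hthis
      | right j =>
        rw [hcoordT β j]
        have hc : (β (Fin.natAdd n j) : ℚ) =
            -∑ i ∈ Finset.univ.filter (fun i => grp i = j), (β (Fin.castAdd r i) : ℚ) := by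
          rw [htail j]; push_cast; ring
        rw [hc]
        simp
  -- structure of maximal cones of F
  have hmem : ∀ σ ∈ F.maxCones, ∃ σb ∈ Fb.maxCones,
      σ = (σb.map (Fin.castAddEmb r)) ∪ (Finset.univ.map (Fin.natAddEmb n)) := by
    intro σ hσ
    rw [hFc] at hσ
    obtain ⟨σb, hσb, hE⟩ := Finset.mem_image.mp hσ
    exact ⟨σb, hσb, hE.symm⟩
  have hmemelim : ∀ (σb : Finset (Fin n)) (p : Fin (n + r)),
      p ∈ (σb.map (Fin.castAddEmb r)) ∪ (Finset.univ.map (Fin.natAddEmb n)) →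
      (∃ i ∈ σb, p = Fin.castAdd r i) ∨ ∃ j : Fin r, p = Fin.natAdd n j := by
    intro σb p hp
    rcases Finset.mem_union.mp hp with h | h
    · obtain ⟨i, hi, hip⟩ := Finset.mem_map.mp h
      exact Or.inl ⟨i, hi, hip.symm⟩
    · obtain ⟨j, _, hjp⟩ := Finset.mem_map.mp h
      exact Or.inr ⟨j, hjp.symm⟩
  have hmemcast : ∀ (σb : Finset (Fin n)) (i : Fin n), i ∈ σb →
      Fin.castAdd r i ∈ (σb.map (Fin.castAddEmb r)) ∪ (Finset.univ.map (Fin.natAddEmb n)) :=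
    fun σb i hi => Finset.mem_union_left _ (Finset.mem_map_of_mem _ hi)
  have hmemnat : ∀ (σb : Finset (Fin n)) (j : Fin r),
      Fin.natAdd n j ∈ (σb.map (Fin.castAddEmb r)) ∪ (Finset.univ.map (Fin.natAddEmb n)) :=
    fun σb j => Finset.mem_union_right _ (Finset.mem_map_of_mem _ (Finset.mem_univ j))
  -- restriction of the Cayley generators along castAdd
  have hres : ∀ i : Fin n,
      (LinearMap.funLeft ℚ ℚ (Fin.castAdd r)) (fun b => (F.v (Fin.castAdd r i) b : ℚ)) =
        fun b' => (Fb.v i b' : ℚ) := by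
    intro i
    funext b'
    rw [LinearMap.funLeft_apply, h1, hFbv]
  have hres0 : ∀ j : Fin r,
      (LinearMap.funLeft ℚ ℚ (Fin.castAdd r)) (fun b => (F.v (Fin.natAdd n j) b : ℚ)) =
        (0 : Fin d → ℚ) := by
    intro j
    funext b'
    rw [LinearMap.funLeft_apply, h3]
    simp
  -- extension of convex PL functions from Fb to F
  have hConvExt : ∀ ℓb : Fin n → ℚ, ConvexPL Fb.v Fb.maxCones Finset.univ ℓb →
      ConvexPL F.v F.maxCones Finset.univ
        (Fin.addCases ℓb (fun _ => 0) : Fin (n + r) → ℚ) := by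
    intro ℓb hℓ σ hσ
    obtain ⟨σb, hσb, rfl⟩ := hmem σ hσ
    obtain ⟨w, hw1, hw2⟩ := hℓ σb hσb
    refine ⟨w.comp (LinearMap.funLeft ℚ ℚ (Fin.castAdd r)), ?_, ?_⟩
    · intro p hp
      rcases hmemelim _ _ hp with ⟨i, hi, rfl⟩ | ⟨j, rfl⟩
      · rw [LinearMap.comp_apply, hres i, hw1 i hi]; simp
      · rw [LinearMap.comp_apply, hres0 j, map_zero]; simp [Fin.addCases_right]
    · intro p _
      induction p using Fin.addCases with
      | left i =>
        rw [LinearMap.comp_apply, hres i]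
        simpa using hw2 i (Finset.mem_univ i)
      | right j =>
        rw [LinearMap.comp_apply, hres0 j, map_zero]
        simp [Fin.addCases_right]
  -- key identity for the extension by zero of the base generators
  have hext : ∀ i : Fin n, extByZero d r (fun b' => (Fb.v i b' : ℚ)) =
      (fun b => (F.v (Fin.castAdd r i) b : ℚ)) -
        (fun b => (F.v (Fin.natAdd n (grp i)) b : ℚ)) := by
    intro i
    funext b
    rw [extByZero_apply, Pi.sub_apply, hvmain, hvtail]
    by_cases h : (b : ℕ) < d
    · rw [dif_pos h, dif_pos h, if_neg (by omega), hFbv]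
      push_cast
      ring
    · rw [dif_neg h, dif_neg h]
      by_cases h' : (b : ℕ) = d + (grp i : ℕ)
      · rw [if_pos h']; ring
      · rw [if_neg h']; ring
  -- restriction of convex PL functions from F to Fb
  have hConvRes : ∀ ℓ : Fin (n + r) → ℚ, ConvexPL F.v F.maxCones Finset.univ ℓ →
      ConvexPL Fb.v Fb.maxCones Finset.univ
        (fun i => ℓ (Fin.castAdd r i) - ℓ (Fin.natAdd n (grp i))) := by
    intro ℓ hℓ σb hσb
    have hσ : (σb.map (Fin.castAddEmb r)) ∪ (Finset.univ.map (Fin.natAddEmb n)) ∈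
        F.maxCones := by
      rw [hFc]; exact Finset.mem_image_of_mem _ hσb
    obtain ⟨w, hw1, hw2⟩ := hℓ _ hσ
    refine ⟨w.comp (extByZero d r), ?_, ?_⟩
    · intro i hi
      rw [LinearMap.comp_apply, hext i, map_sub,
        hw1 _ (hmemcast σb i hi), hw1 _ (hmemnat σb (grp i))]
    · intro i _
      rw [LinearMap.comp_apply, hext i, map_sub, hw1 _ (hmemnat σb (grp i))]
      have := hw2 (Fin.castAdd r i) (Finset.mem_univ _)
      dsimp only
      linarith
  -- pairing with an extended function
  have hpair : ∀ (ℓb : Fin n → ℚ) (β : Fin (n + r) → ℤ),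
      ∑ p, (Fin.addCases ℓb (fun _ => 0) : Fin (n + r) → ℚ) p * (β p : ℚ) =
        ∑ i : Fin n, ℓb i * (β (Fin.castAdd r i) : ℚ) := by
    intro ℓb β
    rw [Fin.sum_univ_add]
    have ht : ∀ j : Fin r,
        (Fin.addCases ℓb (fun _ => 0) : Fin (n + r) → ℚ) (Fin.natAdd n j) *
          (β (Fin.natAdd n j) : ℚ) = 0 := by
      intro j; simp [Fin.addCases_right]
    rw [Finset.sum_congr rfl fun j _ => ht j, Finset.sum_const, smul_zero, add_zero]
    exact Finset.sum_congr rfl fun i _ => by simp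
  refine ⟨key, ?_, ?_⟩
  · -- Part 2 : identification of Mori cones
    intro β hβ
    obtain ⟨hrel, htail⟩ := (key β).mp hβ
    constructor
    · intro hE ℓb hℓb
      have h0 := hE _ (hConvExt ℓb hℓb)
      rwa [hpair ℓb β] at h0
    · intro hE ℓ hℓ
      have h0 := hE _ (hConvRes ℓ hℓ)
      have hT : ∀ j : Fin r, (β (Fin.natAdd n j) : ℚ) =
          -∑ i ∈ Finset.univ.filter (fun i => grp i = j), (β (Fin.castAdd r i) : ℚ) := by
        intro j
        rw [htail j]; push_cast; ring
      have hrw : ∑ p, ℓ p * (β p : ℚ) =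
          ∑ i : Fin n, (ℓ (Fin.castAdd r i) - ℓ (Fin.natAdd n (grp i))) *
            (β (Fin.castAdd r i) : ℚ) := by
        rw [Fin.sum_univ_add]
        have htails : ∑ j : Fin r, ℓ (Fin.natAdd n j) * (β (Fin.natAdd n j) : ℚ) =
            -∑ i : Fin n, ℓ (Fin.natAdd n (grp i)) * (β (Fin.castAdd r i) : ℚ) := by
          have step : ∀ j : Fin r, ℓ (Fin.natAdd n j) * (β (Fin.natAdd n j) : ℚ) =
              -∑ i ∈ Finset.univ.filter (fun i => grp i = j),
                ℓ (Fin.natAdd n (grp i)) * (β (Fin.castAdd r i) : ℚ) := by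
            intro j
            rw [hT j, mul_neg, Finset.mul_sum, neg_inj]
            refine Finset.sum_congr rfl fun i hi => ?_
            rw [(Finset.mem_filter.mp hi).2]
          rw [Finset.sum_congr rfl fun j _ => step j, Finset.sum_neg_distrib, neg_inj]
          exact Finset.sum_fiberwise _ _ _
        rw [htails, ← sub_eq_add_neg, ← Finset.sum_sub_distrib]
        refine Finset.sum_congr rfl fun i _ => ?_
        ring
      rw [hrw]
      exact h0
  · -- Part 3 : tail coordinates of effective classes are nonpositive
    intro β hβ hE j
    obtain ⟨hrel, htail⟩ := (key β).mp hβ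
    have h0 := hE _ (hConvExt (fun i => (y j i : ℚ)) (hconv j))
    rw [hpair (fun i => (y j i : ℚ)) β] at h0
    have hsum : ∑ i : Fin n, (y j i : ℚ) * (β (Fin.castAdd r i) : ℚ) =
        ∑ i ∈ Finset.univ.filter (fun i => grp i = j), (β (Fin.castAdd r i) : ℚ) := by
      rw [Finset.sum_filter]
      refine Finset.sum_congr rfl fun i _ => ?_
      rw [hyval j i]
      by_cases h : grp i = j <;> simp [h]
    rw [hsum] at h0
    have hT : (β (Fin.natAdd n j) : ℚ) =
        -∑ i ∈ Finset.univ.filter (fun i => grp i = j), (β (Fin.castAdd r i) : ℚ) := by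
      rw [htail j]; push_cast; ring
    have hfin : (β (Fin.natAdd n j) : ℚ) ≤ 0 := by rw [hT]; linarith
    exact_mod_cast hfin
end TRMC
end
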